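/- Let W : [0,T] → ℂ be continuous with |W_t| = 1 for all t, and let g : [0,T] → ℂ \ {0} be differentiable with ∂_t g(t) = −g(t)(g(t) + W_t)/(g(t) − W_t) and g(t) ≠ W_t for all t. Then the Schwarz reflection h(t) = 1/conj(g(t)) also satisfies ∂_t h(t) = −h(t)(h(t) + W_t)/(h(t) − W_t). -/

import Mathlib

/-!
The inversion `I z = (conj z)⁻¹` has real derivative `v ↦ -conj v / (conj z)²`, and for
`‖w‖ = 1` the radial Loewner field is `I`-equivariant: `Ψ(w, I z) = -conj (Ψ(w, z)) / (conj z)²`.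
The chain rule applied to `I ∘ g` therefore turns the equation for `g` into the one for `I ∘ g`.
-/

open ComplexConjugate

noncomputable def radialLoewnerField (w z : ℂ) : ℂ := -z * (z + w) / (z - w)

/-- At `z = 0` and `z = w` both sides are the junk value `0`. -/
theorem radialLoewnerField_inv_conj {w : ℂ} (hw : ‖w‖ = 1) (z : ℂ) :
    radialLoewnerField w (conj z)⁻¹ = -conj (radialLoewnerField w z) / conj z ^ 2 := by
  have hwc : conj w = w⁻¹ := (Complex.inv_eq_conj hw).symm
  rcases eq_or_ne z 0 with rfl | hz
  · simp [radialLoewnerField]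
  rcases eq_or_ne z w with rfl | hzw
  · simp [radialLoewnerField, hwc]
  have hw0 : w ≠ 0 := norm_ne_zero_iff.mp (by rw [hw]; exact one_ne_zero)
  have hu : conj z ≠ 0 := by simpa using hz
  have huw : 1 - conj z * w ≠ 0 := by
    rw [sub_ne_zero, ne_comm, Ne, mul_eq_one_iff_eq_inv₀ hw0, ← hwc]
    exact fun h => hzw (RingHom.injective _ h)
  simp only [radialLoewnerField, map_div₀, map_mul, map_neg, map_add, map_sub, hwc]
  generalize conj z = u at hu huw
  rw [show u⁻¹ - w = (1 - u * w) / u by field_simp,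
    show u - w⁻¹ = -(1 - u * w) / w by field_simp; ring]
  field_simp
  ring

theorem HasDerivAt.inv_conj {g : ℝ → ℂ} {g' : ℂ} {t : ℝ} (hg : HasDerivAt g g' t)
    (h0 : g t ≠ 0) : HasDerivAt (fun s => (conj (g s))⁻¹) (-conj g' / conj (g t) ^ 2) t := by
  refine ((hasDerivAt_inv (by simpa using h0 : conj (g t) ≠ 0)).comp t hg.star).congr_deriv ?_
  simp only [Complex.star_def]
  ring

theorem radial_loewner_schwarz_reflection_general
    (W : ℝ → ℂ)
    (hW1 : ∀ t : ℝ, ‖W t‖ = 1)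
    (g : ℝ → ℂ)
    (hg0 : ∀ t : ℝ, g t ≠ 0)
    (hode : ∀ t : ℝ, HasDerivAt g (-g t * (g t + W t) / (g t - W t)) t) :
    ∀ t : ℝ,
      HasDerivAt (fun s => ((starRingEnd ℂ) (g s))⁻¹)
        (-((starRingEnd ℂ) (g t))⁻¹ *
            (((starRingEnd ℂ) (g t))⁻¹ + W t) /
          (((starRingEnd ℂ) (g t))⁻¹ - W t)) t := fun t =>
  ((hode t).inv_conj (hg0 t)).congr_deriv (radialLoewnerField_inv_conj (hW1 t) (g t)).symm

/-- If `g` solves the radial Loewner equation `∂ₜ g = -g (g + W)/(g - W)` with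
unit-circle-valued driving term `W` and `g(t) ∉ {0, W_t}`, then its Schwarz
reflection `h(t) = 1/conj(g(t))` solves the same equation. -/
theorem radial_loewner_schwarz_reflection
    (W : ℝ → ℂ) (hW : Continuous W)
    (hW1 : ∀ t : ℝ, ‖W t‖ = 1)
    (g : ℝ → ℂ)
    (hg0 : ∀ t : ℝ, g t ≠ 0)
    (hgW : ∀ t : ℝ, g t ≠ W t)
    (hode : ∀ t : ℝ, HasDerivAt g (-g t * (g t + W t) / (g t - W t)) t) :
    ∀ t : ℝ,
      HasDerivAt (fun s => ((starRingEnd ℂ) (g s))⁻¹)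
        (-((starRingEnd ℂ) (g t))⁻¹ *
            (((starRingEnd ℂ) (g t))⁻¹ + W t) /
          (((starRingEnd ℂ) (g t))⁻¹ - W t)) t :=
  radial_loewner_schwarz_reflection_general W hW1 g hg0 hode
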